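/- Let P be a partition of T into three simply connected districts such that C_1 ∈ P_1. Then exactly one of the following four conditions holds: (A) there exist adjacent vertices a ∈ P_2 ∩ bd(T) and b ∈ P_3 ∩ bd(T); (B) P_2 ∩ bd(T) = ∅; (C) P_3 ∩ bd(T) = ∅; (D) no vertex of P_2 is adjacent to any vertex of P_3. -/

import Mathlib

namespace Redistrict

/-!
Common definitions: the triangular lattice `G_Δ`, the triangular region `T` of side
length `n`, simply connected sets, partitions into three simply connected districts,
recombination moves, the state space `Ω` and the graph `G_Ω`.
-/

/-- The infinite triangular lattice graph `G_Δ` on `ℤ²`: two vertices are adjacent iff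
their difference is one of `(1,0),(-1,0),(0,1),(0,-1),(1,-1),(-1,1)`. -/
def TriLattice : SimpleGraph (ℤ × ℤ) :=
  SimpleGraph.fromRel (fun v w => v - w = (1, 0) ∨ v - w = (0, 1) ∨ v - w = (1, -1))

/-- The triangular region `T` of side length `n`, oriented with a vertical right edge:
column `x` (for `1 ≤ x ≤ n`) consists of the `x` vertices `(x, y)` with `1 - x ≤ y ≤ 0`.
It has `n (n+1) / 2` vertices, `n` on each side. -/
def Tset (n : ℕ) : Set (ℤ × ℤ) :=
  {p | 1 ≤ p.1 ∧ p.1 ≤ (n : ℤ) ∧ 1 - p.1 ≤ p.2 ∧ p.2 ≤ 0}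

/-- The neighborhood `N(v)` of a vertex of the triangular lattice. -/
def nbhd (v : ℤ × ℤ) : Set (ℤ × ℤ) := {w | TriLattice.Adj v w}

/-- The boundary `bd(T)`: vertices of `T` adjacent to some vertex outside `T`. -/
def bdT (n : ℕ) : Set (ℤ × ℤ) :=
  {v ∈ Tset n | ∃ w, TriLattice.Adj v w ∧ w ∉ Tset n}

/-- A corner of `T`: a vertex of `T` with exactly two neighbors in `T`. -/
def IsCorner (n : ℕ) (v : ℤ × ℤ) : Prop :=
  v ∈ Tset n ∧ (nbhd v ∩ Tset n).ncard = 2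

/-- The subgraph of `G_Δ` induced on `S` is connected. -/
def ConnSet (S : Set (ℤ × ℤ)) : Prop := (TriLattice.induce S).Connected

/-- A set of vertices is simply connected if it induces a connected subgraph of `G_Δ`
and its complement induces a connected subgraph of `G_Δ`. -/
def SimplyConn (S : Set (ℤ × ℤ)) : Prop := ConnSet S ∧ ConnSet Sᶜ

/-- A partition of `T` (of side length `n`) into three simply connected districts
`P 0`, `P 1`, `P 2` (the paper's `P_1, P_2, P_3`). -/
structure TriPartition (n : ℕ) where
  P : Fin 3 → Set (ℤ × ℤ)
  disj : ∀ i j : Fin 3, i ≠ j → Disjoint (P i) (P j)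
  cover : (⋃ i, P i) = Tset n
  sc : ∀ i, SimplyConn (P i)

/-- A recombination move: the two partitions differ, and some district of one is
identical to some district of the other. -/
def RecombMove {n : ℕ} (σ τ : TriPartition n) : Prop :=
  σ ≠ τ ∧ ∃ i j : Fin 3, σ.P i = τ.P j

/-- A partition is balanced (w.r.t. ideal sizes `k`) if `|P_i| = k_i` for each `i`. -/
def IsBalanced {n : ℕ} (k : Fin 3 → ℕ) (σ : TriPartition n) : Prop :=
  ∀ i, (σ.P i).ncard = k i

/-- `k_i - 1 ≤ |P_i| ≤ k_i + 1` for each `i`, i.e. balanced or nearly balanced. -/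
def InOmega {n : ℕ} (k : Fin 3 → ℕ) (σ : TriPartition n) : Prop :=
  ∀ i, k i ≤ (σ.P i).ncard + 1 ∧ (σ.P i).ncard ≤ k i + 1

/-- A partition is nearly balanced if it is not balanced but
`k_i - 1 ≤ |P_i| ≤ k_i + 1` for each `i`. -/
def NearlyBalanced {n : ℕ} (k : Fin 3 → ℕ) (σ : TriPartition n) : Prop :=
  ¬ IsBalanced k σ ∧ InOmega k σ

lemma IsBalanced.inOmega {n : ℕ} {k : Fin 3 → ℕ} {σ : TriPartition n}
    (h : IsBalanced k σ) : InOmega k σ := fun i => by have := h i; omega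

/-- The state space `Ω` of all balanced and nearly balanced partitions. -/
abbrev Omega (n : ℕ) (k : Fin 3 → ℕ) : Type := {σ : TriPartition n // InOmega k σ}

/-- The graph `G_Ω` on `Ω` whose edges are the recombination moves. -/
def GOmega (n : ℕ) (k : Fin 3 → ℕ) : SimpleGraph (Omega n k) where
  Adj σ τ := RecombMove σ.val τ.val
  symm := by
    constructor
    intro σ τ h
    obtain ⟨hne, i, j, hij⟩ := h
    exact ⟨Ne.symm hne, j, i, hij.symm⟩
  loopless := by
    constructor
    intro σ h
    obtain ⟨hne, -⟩ := h
    exact hne rfl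

/-- The columns of `T`: `colEq n i` is the `i`-th column `C_i` (vertices with first
coordinate `i`), and `colLT`, `colLE`, `colGT` are `C_{<i}`, `C_{≤i}`, `C_{>i}`. -/
def colEq (n i : ℕ) : Set (ℤ × ℤ) := {p ∈ Tset n | p.1 = (i : ℤ)}

def colLT (n i : ℕ) : Set (ℤ × ℤ) := {p ∈ Tset n | p.1 < (i : ℤ)}

def colLE (n i : ℕ) : Set (ℤ × ℤ) := {p ∈ Tset n | p.1 ≤ (i : ℤ)}

def colGT (n i : ℕ) : Set (ℤ × ℤ) := {p ∈ Tset n | (i : ℤ) < p.1}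

/-- The single leftmost vertex `C_1` of `T`. -/
def c1 : ℤ × ℤ := (1, 0)

/-- A vertex of `P_i` is exposed if it is adjacent to a vertex of `T` in another district. -/
def Exposed {n : ℕ} (σ : TriPartition n) (i : Fin 3) (v : ℤ × ℤ) : Prop :=
  v ∈ σ.P i ∧ ∃ w ∈ Tset n, TriLattice.Adj v w ∧ w ∉ σ.P i

/-- `S` is a connected component of `A`: a nonempty maximal connected subset of `A`. -/
def IsCompOf (S A : Set (ℤ × ℤ)) : Prop :=
  S.Nonempty ∧ S ⊆ A ∧ ConnSet S ∧ ∀ S', S ⊆ S' → S' ⊆ A → ConnSet S' → S' = S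

/-- Reassigning the vertex `v` to district `j` (removing it from the other districts)
yields again a partition of `T` into three simply connected districts. -/
def FlipTo {n : ℕ} (σ : TriPartition n) (v : ℤ × ℤ) (j : Fin 3) : Prop :=
  ∃ τ : TriPartition n, τ.P j = σ.P j ∪ {v} ∧ ∀ l, l ≠ j → τ.P l = σ.P l \ {v}

/-- `τ` is obtained from `σ` by reassigning the single vertex `v` to a new district. -/
def FlipMove {n : ℕ} (σ τ : TriPartition n) (v : ℤ × ℤ) : Prop :=
  ∃ j : Fin 3, v ∉ σ.P j ∧ τ.P j = σ.P j ∪ {v} ∧ ∀ l, l ≠ j → τ.P l = σ.P l \ {v}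

/-- A subset `S` of `P_i` is shrinkable if it contains a vertex that can be removed
from `P_i` and added to a different district, producing a valid partition. -/
def Shrinkable {n : ℕ} (σ : TriPartition n) (i : Fin 3) (S : Set (ℤ × ℤ)) : Prop :=
  ∃ x ∈ S, ∃ j : Fin 3, j ≠ i ∧ FlipTo σ x j

/-- The six unit directions of the triangular lattice. -/
def triDir (d : ℤ × ℤ) : Prop :=
  d = (1, 0) ∨ d = (-1, 0) ∨ d = (0, 1) ∨ d = (0, -1) ∨ d = (1, -1) ∨ d = (-1, 1)

/-- The `l`-th vertex (1-indexed) on the lattice line through `base` with direction `dir`. -/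
def towerVtx (base dir : ℤ × ℤ) (l : ℕ) : ℤ × ℤ := base + ((l : ℤ) - 1) • dir

/-- A tower for the partition `σ`: a sequence `v_1, …, v_t` (`t ≥ 2`) of consecutive
vertices on a straight lattice line such that `v_1` is in the same district as both common
neighbors of `v_1` and `v_2`; no two consecutive tower vertices are in the same district;
for `2 ≤ l ≤ t`, moving `v_l` to the district of `v_{l-1}` does not yield a valid
partition; and the next vertex `v_{t+1}` on the line cannot be appended to the tower. -/
structure Tower (n : ℕ) (σ : TriPartition n) where
  t : ℕ
  base : ℤ × ℤ
  dir : ℤ × ℤ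
  dst : ℕ → Fin 3
  two_le : 2 ≤ t
  dir_mem : triDir dir
  mem : ∀ l, 1 ≤ l → l ≤ t → towerVtx base dir l ∈ σ.P (dst l)
  top : ∀ u, TriLattice.Adj u (towerVtx base dir 1) →
      TriLattice.Adj u (towerVtx base dir 2) → u ∈ σ.P (dst 1)
  alt : ∀ l, 1 ≤ l → l < t → dst l ≠ dst (l + 1)
  stuck : ∀ l, 2 ≤ l → l ≤ t → ¬ FlipTo σ (towerVtx base dir l) (dst (l - 1))
  maximal : ¬ ∃ c : Fin 3, towerVtx base dir (t + 1) ∈ σ.P c ∧ c ≠ dst t ∧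
      ¬ FlipTo σ (towerVtx base dir (t + 1)) (dst t)

/-- A parametrization of the boundary cycle of `T` (of side length `n`), of period
`3(n-1)`: it runs along the top edge, then the right vertical edge, then the hypotenuse. -/
def bdCycleFun (n : ℕ) (t : ℤ) : ℤ × ℤ :=
  let m : ℤ := 3 * ((n : ℤ) - 1)
  let s : ℤ := t % m
  if s < (n : ℤ) - 1 then (1 + s, 0)
  else if s < 2 * ((n : ℤ) - 1) then ((n : ℤ), ((n : ℤ) - 1) - s)
  else (3 * ((n : ℤ) - 1) + 1 - s, 1 - (3 * ((n : ℤ) - 1) + 1 - s))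

/-- A vertex is enclosed by (the vertex set of) a cycle `C` if it is not on `C` and the set
of vertices reachable from it in the lattice avoiding `C` is finite, i.e. it lies in the
bounded region of the plane determined by `C`. -/
def Enclosed (C : Set (ℤ × ℤ)) (u : ℤ × ℤ) : Prop :=
  ∃ hu : u ∈ Cᶜ,
    {w : ℤ × ℤ | ∃ hw : w ∈ Cᶜ, (TriLattice.induce Cᶜ).Reachable ⟨u, hu⟩ ⟨w, hw⟩}.Finite

/-- `N_C(y)`: the neighbors of `y` lying on or inside the cycle with vertex set `C`. -/
def cycNbhd (C : Set (ℤ × ℤ)) (y : ℤ × ℤ) : Set (ℤ × ℤ) :=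
  {w | TriLattice.Adj y w ∧ (w ∈ C ∨ Enclosed C w)}

/-- A triangular face: three mutually adjacent vertices. -/
def TriFace (a b c : ℤ × ℤ) : Prop :=
  TriLattice.Adj a b ∧ TriLattice.Adj b c ∧ TriLattice.Adj a c

/-- Twice the signed area of the triangle `a b c`; its sign gives the orientation
(clockwise vs. counterclockwise) of the triple in the planar embedding. -/
def detOr (a b c : ℤ × ℤ) : ℤ :=
  (b.1 - a.1) * (c.2 - a.2) - (b.2 - a.2) * (c.1 - a.1)

/-- Case (A): `P_2` and `P_3` have adjacent boundary vertices. -/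
def CondA (n : ℕ) (σ : TriPartition n) : Prop :=
  ∃ a b : ℤ × ℤ, a ∈ σ.P 1 ∩ bdT n ∧ b ∈ σ.P 2 ∩ bdT n ∧ TriLattice.Adj a b

/-- Case (B): `P_2` does not meet the boundary of `T`. -/
def CondB (n : ℕ) (σ : TriPartition n) : Prop := σ.P 1 ∩ bdT n = ∅

/-- Case (C): `P_3` does not meet the boundary of `T`. -/
def CondC (n : ℕ) (σ : TriPartition n) : Prop := σ.P 2 ∩ bdT n = ∅

/-- Case (D): no vertex of `P_2` is adjacent to any vertex of `P_3`. -/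
def CondD (n : ℕ) (σ : TriPartition n) : Prop :=
  ∀ a ∈ σ.P 1, ∀ b ∈ σ.P 2, ¬ TriLattice.Adj a b

/-!
Suppose (A), (B), (C) fail but some `x ∈ P 1` is adjacent to some `y ∈ P 2`. Let `c` be the
mod 2 edge cochain that is `1` exactly on the edges between `P 1` and `P 2`. Around a triangle
its sum is odd only if the three corners lie in `P 1`, `P 2` and a third class, and without (A)
that third corner lies in `P 0`, not outside `T`. Since `P 0` is connected, any two faces with a
corner in `P 0` differ by the coboundary of a cochain supported on edges at `P 0`; since the
number of odd triangles is even, `c` can be corrected on the edges at `P 0` to a cocycle. Summing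
the cocycle along horizontal rays gives a potential `μ` with `μ v + μ w = c(vw)` on every edge
away from `P 0`, and `μ` vanishes outside `T`. As `P 1` and `P 2` are connected and meet
`bd(T)`, `μ` vanishes on both, contradicting `μ x + μ y = 1`.

The other cases exclude each other because the complement of `P 0` is connected.
-/

def edgeDir : Fin 3 → ℤ × ℤ := ![(1, 0), (0, 1), (1, -1)]

theorem triLattice_adj_iff {v w : ℤ × ℤ} :
    TriLattice.Adj v w ↔ ∃ d, w = v + edgeDir d ∨ v = w + edgeDir d := by
  simp [TriLattice, Fin.exists_fin_succ, edgeDir, Prod.ext_iff]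
  omega

theorem ConnSet.apply_eq_of_adj {S : Set (ℤ × ℤ)} (hS : ConnSet S) {α : Type*} {f : ℤ × ℤ → α}
    (hf : ∀ v ∈ S, ∀ w ∈ S, TriLattice.Adj v w → f v = f w) {v w : ℤ × ℤ} (hv : v ∈ S)
    (hw : w ∈ S) : f v = f w := by
  suffices ∀ a b : S, (TriLattice.induce S).Walk a b → f a = f b from
    this ⟨v, hv⟩ ⟨w, hw⟩ (hS.preconnected _ _).some
  intro a b p
  induction p with
  | nil => rfl
  | cons h _ ih => exact (hf _ (Subtype.prop _) _ (Subtype.prop _) h).trans ih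

theorem not_connSet_union {A B : Set (ℤ × ℤ)} (hA : A.Nonempty) (hB : B.Nonempty)
    (hAB : Disjoint A B) (hsep : ∀ a ∈ A, ∀ b ∈ B, ¬ TriLattice.Adj a b) :
    ¬ ConnSet (A ∪ B) := by
  intro hS
  obtain ⟨a, ha⟩ := hA
  obtain ⟨b, hb⟩ := hB
  have key : (a ∈ A) = (b ∈ A) := hS.apply_eq_of_adj (f := (· ∈ A)) ?_ (.inl ha) (.inr hb)
  · exact hAB.notMem_of_mem_left (key ▸ ha) hb
  rintro v (hv | hv) w (hw | hw) hvw
  · simp [hv, hw]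
  · exact absurd hvw (hsep v hv w hw)
  · exact absurd hvw.symm (hsep w hw v hv)
  · simp [hAB.notMem_of_mem_right hv, hAB.notMem_of_mem_right hw]

/-- The edge `(p, d)` joins `p` to `p + edgeDir d`. -/
abbrev Edge := (ℤ × ℤ) × Fin 3

/-- `(z, false)` is the triangle `z, z + (1, 0), z + (0, 1)` and `(z, true)` is the triangle
`z + (1, 0), z + (0, 1), z + (1, 1)`; every triangle of `G_Δ` is of exactly one of these forms. -/
abbrev Face := (ℤ × ℤ) × Bool

def Face.verts : Face → Set (ℤ × ℤ)
  | (z, false) => {z, z + (1, 0), z + (0, 1)}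
  | (z, true) => {z + (1, 0), z + (0, 1), z + (1, 1)}

theorem Face.mem_verts_iff {v : ℤ × ℤ} {f : Face} : v ∈ f.verts ↔
    f = (v, false) ∨ f = (v - (1, 0), true) ∨ f = (v - (1, 0), false) ∨
      f = (v - (1, 1), true) ∨ f = (v - (0, 1), false) ∨ f = (v - (0, 1), true) := by
  obtain ⟨⟨a, b⟩, _ | _⟩ := f <;> obtain ⟨x, y⟩ := v <;>
    simp [Face.verts, Prod.ext_iff] <;> omega

def Edge.lowerFace (e : Edge) : Face := (e.1 - ![(0, 0), (0, 0), (0, 1)] e.2, false)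

def Edge.upperFace (e : Edge) : Face := (e.1 - ![(0, 1), (1, 0), (0, 1)] e.2, true)

theorem Edge.mem_verts_lowerFace (e : Edge) :
    e.1 ∈ e.lowerFace.verts ∧ e.1 + edgeDir e.2 ∈ e.lowerFace.verts := by
  obtain ⟨⟨x, y⟩, d⟩ := e
  fin_cases d <;> simp [Edge.lowerFace, Face.verts, edgeDir, ← sub_eq_add_neg]

/-- The coboundary of a mod 2 edge cochain: its sum around each triangle. -/
noncomputable def coboundary : (Edge →₀ ZMod 2) →ₗ[ZMod 2] (Face →₀ ZMod 2) :=
  Finsupp.linearCombination (ZMod 2) fun e => .single e.lowerFace 1 + .single e.upperFace 1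

theorem coboundary_single (e : Edge) (a : ZMod 2) :
    coboundary (.single e a) = .single e.lowerFace a + .single e.upperFace a := by
  simp [coboundary, Finsupp.linearCombination_single]

theorem coboundary_apply_lower (c : Edge →₀ ZMod 2) (z : ℤ × ℤ) :
    coboundary c (z, false) = c (z, 0) + c (z, 1) + c (z + (0, 1), 2) := by
  induction c using Finsupp.induction_linear with
  | zero => simp
  | add c c' hc hc' => simp only [map_add, Finsupp.add_apply, hc, hc']; ring
  | single e a =>
    obtain ⟨⟨x, y⟩, d⟩ := e
    obtain ⟨z1, z2⟩ := z
    fin_cases d <;>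
      simp [coboundary_single, Finsupp.single_apply, Edge.lowerFace, Edge.upperFace,
        sub_eq_iff_eq_add]

theorem coboundary_apply_upper (c : Edge →₀ ZMod 2) (z : ℤ × ℤ) :
    coboundary c (z, true) = c (z + (0, 1), 0) + c (z + (1, 0), 1) + c (z + (0, 1), 2) := by
  induction c using Finsupp.induction_linear with
  | zero => simp
  | add c c' hc hc' => simp only [map_add, Finsupp.add_apply, hc, hc']; ring
  | single e a =>
    obtain ⟨⟨x, y⟩, d⟩ := e
    obtain ⟨z1, z2⟩ := z
    fin_cases d <;>
      simp [coboundary_single, Finsupp.single_apply, Edge.lowerFace, Edge.upperFace,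
        sub_eq_iff_eq_add]

theorem sum_coboundary (c : Edge →₀ ZMod 2) : (coboundary c).sum (fun _ a => a) = 0 := by
  induction c using Finsupp.induction_linear with
  | zero => simp
  | add c c' hc hc' =>
    rw [map_add, Finsupp.sum_add_index' (fun _ => rfl) (fun _ _ _ => rfl), hc, hc', add_zero]
  | single e a =>
    rw [coboundary_single, Finsupp.sum_add_index' (fun _ => rfl) (fun _ _ _ => rfl)]
    simp [CharTwo.add_self_eq_zero]

noncomputable def rayPotential (B : ℤ) (c : Edge →₀ ZMod 2) (v : ℤ × ℤ) : ZMod 2 :=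
  ∑ a ∈ Finset.Ico v.1 B, c ((a, v.2), 0)

section RayPotential

variable {B : ℤ} {c : Edge →₀ ZMod 2}

theorem rayPotential_of_le {v : ℤ × ℤ} (hv : B ≤ v.1) : rayPotential B c v = 0 := by
  simp [rayPotential, Finset.Ico_eq_empty_of_le hv]

variable (hB : ∀ p d, B ≤ p.1 → c (p, d) = 0)
include hB

theorem rayPotential_add_edgeDir_of_le {p : ℤ × ℤ} (hp : B ≤ p.1) (d : Fin 3) :
    rayPotential B c p + rayPotential B c (p + edgeDir d) = c (p, d) := by
  have : B ≤ (p + edgeDir d).1 := by fin_cases d <;> simp [edgeDir] <;> omega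
  rw [rayPotential_of_le hp, rayPotential_of_le this, hB _ _ hp, add_zero]

theorem rayPotential_add_right (p : ℤ × ℤ) :
    rayPotential B c p + rayPotential B c (p + (1, 0)) = c (p, 0) := by
  rcases lt_or_ge p.1 B with h | h
  · have : rayPotential B c (p + (1, 0)) = ∑ a ∈ Finset.Ico (p.1 + 1) B, c ((a, p.2), 0) := by
      simp [rayPotential]
    rw [this, rayPotential, Finset.Ico_eq_cons_Ioo h, Finset.sum_cons,
      ← Finset.Ico_add_one_left_eq_Ioo, add_assoc, CharTwo.add_self_eq_zero, add_zero]
  · exact rayPotential_add_edgeDir_of_le hB h 0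

variable (hc : coboundary c = 0)
include hc

/-- Induction leftwards from `B`: the two triangles between the vertical edges at `x - 1` and `x`
relate the two edges. -/
theorem rayPotential_add_up (p : ℤ × ℤ) :
    rayPotential B c p + rayPotential B c (p + (0, 1)) = c (p, 1) := by
  obtain ⟨x, y⟩ := p
  rcases le_or_gt x B with h | h
  · induction x, h using Int.leInductionDown with
    | base => exact rayPotential_add_edgeDir_of_le hB le_rfl 1
    | pred x hx ih =>
      have hL := coboundary_apply_lower c (x - 1, y)
      have hU := coboundary_apply_upper c (x - 1, y)
      have hr := rayPotential_add_right hB (x - 1, y)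
      have hr' := rayPotential_add_right hB (x - 1, y + 1)
      simp only [hc, Finsupp.coe_zero, Pi.zero_apply, Prod.mk_add_mk, add_zero,
        sub_add_cancel] at hL hU hr hr' ih ⊢
      linear_combination (norm := ring_nf) hL + hU + hr + hr' + ih
      reduce_mod_char
  · exact rayPotential_add_edgeDir_of_le hB h.le 1

theorem rayPotential_add_diag (p : ℤ × ℤ) :
    rayPotential B c p + rayPotential B c (p + (1, -1)) = c (p, 2) := by
  have hL := coboundary_apply_lower c (p - (0, 1))
  have hr := rayPotential_add_right hB (p - (0, 1))
  have hu := rayPotential_add_up hB hc (p - (0, 1))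
  simp only [hc, Finsupp.coe_zero, Pi.zero_apply, sub_add_cancel] at hL hu
  rw [show p - (0, 1) + (1, 0) = p + (1, -1) by ext <;> simp; ring] at hr
  linear_combination (norm := ring_nf) hL + hr + hu
  reduce_mod_char

theorem rayPotential_add_edgeDir (p : ℤ × ℤ) (d : Fin 3) :
    rayPotential B c p + rayPotential B c (p + edgeDir d) = c (p, d) := by
  fin_cases d
  · exact rayPotential_add_right hB p
  · exact rayPotential_add_up hB hc p
  · exact rayPotential_add_diag hB hc p

theorem rayPotential_add_of_adj {v w : ℤ × ℤ} (hvw : TriLattice.Adj v w) :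
    ∃ e : Edge, (e.1 = v ∧ e.1 + edgeDir e.2 = w ∨ e.1 = w ∧ e.1 + edgeDir e.2 = v) ∧
      rayPotential B c v + rayPotential B c w = c e := by
  obtain ⟨d, rfl | rfl⟩ := triLattice_adj_iff.1 hvw
  · exact ⟨(v, d), .inl ⟨rfl, rfl⟩, rayPotential_add_edgeDir hB hc v d⟩
  · exact ⟨(w, d), .inr ⟨rfl, rfl⟩, by rw [add_comm, rayPotential_add_edgeDir hB hc w d]⟩

end RayPotential

def Edge.Touches (S : Set (ℤ × ℤ)) (e : Edge) : Prop := e.1 ∈ S ∨ e.1 + edgeDir e.2 ∈ S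

noncomputable def touchingCoboundaries (S : Set (ℤ × ℤ)) :
    Submodule (ZMod 2) (Face →₀ ZMod 2) :=
  (Finsupp.supported (ZMod 2) (ZMod 2) {e : Edge | e.Touches S}).map coboundary

noncomputable def faceClass (S : Set (ℤ × ℤ)) (f : Face) :
    (Face →₀ ZMod 2) ⧸ touchingCoboundaries S :=
  Submodule.Quotient.mk (.single f 1)

section FaceClass

variable {S : Set (ℤ × ℤ)}

theorem faceClass_lowerFace_eq_upperFace {e : Edge} (he : e.Touches S) :
    faceClass S e.lowerFace = faceClass S e.upperFace := by
  refine (Submodule.Quotient.eq _).2 ⟨.single e 1, Finsupp.single_mem_supported _ _ he, ?_⟩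
  rw [coboundary_single, ZModModule.sub_eq_add]

/-- The six triangles around `v` form a cycle in which consecutive triangles share an edge at
`v`; five of these edges suffice. -/
theorem faceClass_eq_of_mem_verts {v : ℤ × ℤ} (hv : v ∈ S) {f : Face} (hf : v ∈ f.verts) :
    faceClass S f = faceClass S (v, false) := by
  obtain ⟨x, y⟩ := v
  have h1 := faceClass_lowerFace_eq_upperFace (S := S) (e := ((x, y), 0)) (.inl hv)
  have h2 := faceClass_lowerFace_eq_upperFace (S := S) (e := ((x, y), 2)) (.inl hv)
  have h3 := faceClass_lowerFace_eq_upperFace (S := S) (e := ((x, y - 1), 1))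
    (.inr (by simpa [edgeDir]))
  have h5 := faceClass_lowerFace_eq_upperFace (S := S) (e := ((x - 1, y + 1), 2))
    (.inr (by simpa [edgeDir]))
  have h6 := faceClass_lowerFace_eq_upperFace (S := S) (e := ((x, y), 1)) (.inl hv)
  simp [Edge.lowerFace, Edge.upperFace] at h1 h2 h3 h5 h6
  rw [Face.mem_verts_iff] at hf
  rcases hf with rfl | rfl | rfl | rfl | rfl | rfl <;> simp [← h1, h2, ← h3, h5, ← h6]

theorem faceClass_eq_of_connSet (hS : ConnSet S) {v w : ℤ × ℤ} (hv : v ∈ S) (hw : w ∈ S) :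
    faceClass S (v, false) = faceClass S (w, false) := by
  refine hS.apply_eq_of_adj (f := fun v => faceClass S (v, false)) ?_ hv hw
  intro v hv w hw hvw
  obtain ⟨d, rfl | rfl⟩ := triLattice_adj_iff.1 hvw
  · obtain ⟨h1, h2⟩ := Edge.mem_verts_lowerFace (v, d)
    exact (faceClass_eq_of_mem_verts hv h1).symm.trans (faceClass_eq_of_mem_verts hw h2)
  · obtain ⟨h1, h2⟩ := Edge.mem_verts_lowerFace (w, d)
    exact (faceClass_eq_of_mem_verts hv h2).symm.trans (faceClass_eq_of_mem_verts hw h1)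

theorem mem_touchingCoboundaries (hS : ConnSet S) {φ : Face →₀ ZMod 2}
    (hφ : ∀ f ∈ φ.support, ∃ v ∈ S, v ∈ f.verts) (hsum : φ.sum (fun _ r => r) = 0) :
    φ ∈ touchingCoboundaries S := by
  obtain ⟨⟨a, ha⟩⟩ := hS.nonempty
  have hcls : ∀ f ∈ φ.support, faceClass S f = faceClass S (a, false) := by
    intro f hf
    obtain ⟨v, hv, hvf⟩ := hφ f hf
    exact (faceClass_eq_of_mem_verts hv hvf).trans (faceClass_eq_of_connSet hS hv ha)
  rw [← Submodule.Quotient.mk_eq_zero, ← (touchingCoboundaries S).mkQ_apply]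
  calc (touchingCoboundaries S).mkQ φ = φ.sum fun f r => r • faceClass S f := by
        conv_lhs => rw [← Finsupp.sum_single φ]
        rw [map_finsuppSum]
        refine Finsupp.sum_congr fun f _ => ?_
        rw [← Finsupp.smul_single_one, map_smul]
        rfl
    _ = φ.sum fun _ r => r • faceClass S (a, false) :=
        Finsupp.sum_congr fun f hf => by rw [hcls f hf]
    _ = 0 := by
        simp only [Finsupp.sum] at hsum ⊢
        rw [← Finset.sum_smul, hsum, zero_smul]

end FaceClass

theorem mem_tset_iff {n : ℕ} {x y : ℤ} :
    (x, y) ∈ Tset n ↔ 1 ≤ x ∧ x ≤ n ∧ 1 - x ≤ y ∧ y ≤ 0 := Iff.rfl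

theorem tset_finite (n : ℕ) : (Tset n).Finite :=
  ((Set.finite_Icc (1 : ℤ) n).prod (Set.finite_Icc (1 - n : ℤ) 0)).subset
    fun _ ⟨h1, h2, h3, h4⟩ => ⟨⟨h1, h2⟩, by omega, h4⟩

theorem tset_compl_nonempty (n : ℕ) : (Tset n)ᶜ.Nonempty :=
  ⟨(0, 0), fun h => by simp [Tset] at h⟩

section TsetSupported

variable {n : ℕ} {c : Edge →₀ ZMod 2} (hT : ∀ e : Edge, ¬ e.Touches (Tset n) → c e = 0)
include hT

theorem apply_eq_zero_of_le (p : ℤ × ℤ) (d : Fin 3) (hp : (n : ℤ) + 1 ≤ p.1) : c (p, d) = 0 := by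
  obtain ⟨x, y⟩ := p
  refine hT _ (not_or.2 ⟨fun h => ?_, fun h => ?_⟩) <;>
    fin_cases d <;> simp [edgeDir, mem_tset_iff] at h hp <;> omega

theorem rayPotential_eq_zero_of_row {x y : ℤ} (hrow : ∀ a, x ≤ a → (a, y) ∉ Tset n) :
    rayPotential (n + 1) c (x, y) = 0 := by
  refine Finset.sum_eq_zero fun a ha => hT _ (not_or.2 ⟨?_, ?_⟩)
  · exact hrow a (Finset.mem_Ico.1 ha).1
  · simpa [edgeDir] using hrow (a + 1) (by linarith [(Finset.mem_Ico.1 ha).1])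

/-- Going down from `o`, one leaves the rows of `T` without meeting `T`. -/
theorem rayPotential_eq_zero_of_notMem (hc : coboundary c = 0) {o : ℤ × ℤ}
    (ho : o ∉ Tset n) : rayPotential (n + 1) c o = 0 := by
  obtain ⟨x, y⟩ := o
  rcases lt_or_ge y (-n) with hy | hy
  · exact rayPotential_eq_zero_of_row hT fun a _ ha => by rw [mem_tset_iff] at ha; omega
  induction y, hy using Int.leInduction generalizing x with
  | base => exact rayPotential_eq_zero_of_row hT fun a _ ha => by rw [mem_tset_iff] at ha; omega
  | succ y hy ih =>
    by_cases hrow : ∀ a, x ≤ a → (a, y + 1) ∉ Tset n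
    · exact rayPotential_eq_zero_of_row hT hrow
    push Not at hrow
    obtain ⟨a, hxa, haT⟩ := hrow
    have hdown : (x, y) ∉ Tset n := fun h => ho (by rw [mem_tset_iff] at *; omega)
    have hedge := rayPotential_add_up (apply_eq_zero_of_le hT) hc (x, y)
    rw [hT _ (not_or.2 ⟨hdown, by simpa [edgeDir] using ho⟩), ih x hdown, zero_add] at hedge
    simpa using hedge

end TsetSupported

namespace TriPartition

variable {n : ℕ} (σ : TriPartition n)

theorem subset_tset (i : Fin 3) : σ.P i ⊆ Tset n :=
  σ.cover ▸ Set.subset_iUnion σ.P i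

theorem nonempty (i : Fin 3) : (σ.P i).Nonempty :=
  (σ.sc i).1.nonempty.elim fun v => ⟨v, v.2⟩

theorem notMem_of_mem {i j : Fin 3} (hij : i ≠ j) {v : ℤ × ℤ} (hv : v ∈ σ.P i) : v ∉ σ.P j :=
  Set.disjoint_left.1 (σ.disj i j hij) hv

theorem eq_of_mem {i j : Fin 3} {v : ℤ × ℤ} (hi : v ∈ σ.P i) (hj : v ∈ σ.P j) : i = j :=
  by_contra fun h => σ.notMem_of_mem h hi hj

theorem mem_one_or_two {v : ℤ × ℤ} (hv : v ∈ Tset n) (h0 : v ∉ σ.P 0) :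
    v ∈ σ.P 1 ∨ v ∈ σ.P 2 := by
  rw [← σ.cover, Set.mem_iUnion] at hv
  obtain ⟨i, hi⟩ := hv
  fin_cases i
  · exact absurd hi h0
  · exact .inl hi
  · exact .inr hi

theorem compl_P_zero : (σ.P 0)ᶜ = σ.P 1 ∪ σ.P 2 ∪ (Tset n)ᶜ := by
  ext v
  simp only [Set.mem_compl_iff, Set.mem_union]
  constructor
  · intro h0
    by_cases hv : v ∈ Tset n
    · exact .inl (σ.mem_one_or_two hv h0)
    · exact .inr hv
  · rintro ((h | h) | h) h0
    · exact σ.notMem_of_mem (by decide) h h0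
    · exact σ.notMem_of_mem (by decide) h h0
    · exact h (σ.subset_tset 0 h0)

theorem mem_bdT {i : Fin 3} {v w : ℤ × ℤ} (hv : v ∈ σ.P i) (hvw : TriLattice.Adj v w)
    (hw : w ∉ Tset n) : v ∈ σ.P i ∩ bdT n :=
  ⟨hv, σ.subset_tset i hv, w, hvw, hw⟩

def IsInterface (v w : ℤ × ℤ) : Prop := v ∈ σ.P 1 ∧ w ∈ σ.P 2 ∨ v ∈ σ.P 2 ∧ w ∈ σ.P 1

theorem isInterface_comm {v w : ℤ × ℤ} : σ.IsInterface v w ↔ σ.IsInterface w v :=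
  Or.comm.trans (or_congr and_comm and_comm)

theorem not_isInterface_of_notMem_left {v w : ℤ × ℤ} (hv : v ∉ Tset n) :
    ¬ σ.IsInterface v w :=
  fun h => hv (h.elim (fun h => σ.subset_tset 1 h.1) (fun h => σ.subset_tset 2 h.1))

theorem not_isInterface_of_notMem_right {v w : ℤ × ℤ} (hw : w ∉ Tset n) :
    ¬ σ.IsInterface v w :=
  fun h => σ.not_isInterface_of_notMem_left hw (σ.isInterface_comm.1 h)

theorem not_isInterface_of_mem {i : Fin 3} {v w : ℤ × ℤ} (hv : v ∈ σ.P i) (hw : w ∈ σ.P i) :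
    ¬ σ.IsInterface v w := by
  rintro (⟨h1, h2⟩ | ⟨h2, h1⟩)
  · exact absurd ((σ.eq_of_mem hv h1).symm.trans (σ.eq_of_mem hw h2)) (by decide)
  · exact absurd ((σ.eq_of_mem hv h2).symm.trans (σ.eq_of_mem hw h1)) (by decide)

theorem condA_of_isInterface {v w o : ℤ × ℤ} (hvw : σ.IsInterface v w)
    (hvw' : TriLattice.Adj v w) (hvo : TriLattice.Adj v o) (hwo : TriLattice.Adj w o)
    (ho : o ∉ Tset n) : CondA n σ := by
  rcases hvw with ⟨hv, hw⟩ | ⟨hv, hw⟩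
  · exact ⟨v, w, σ.mem_bdT hv hvo ho, σ.mem_bdT hw hwo ho, hvw'⟩
  · exact ⟨w, v, σ.mem_bdT hw hwo ho, σ.mem_bdT hv hvo ho, hvw'.symm⟩

open Classical in
noncomputable def interfaceCochain : Edge →₀ ZMod 2 :=
  Finsupp.ofSupportFinite (fun e => if σ.IsInterface e.1 (e.1 + edgeDir e.2) then 1 else 0) <|
    ((tset_finite n).prod Set.finite_univ).subset fun e he => by
      have : σ.IsInterface e.1 (e.1 + edgeDir e.2) := by_contra fun h => he (if_neg h)
      obtain ⟨h, -⟩ | ⟨h, -⟩ := this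
      · exact ⟨σ.subset_tset 1 h, trivial⟩
      · exact ⟨σ.subset_tset 2 h, trivial⟩

open Classical in
theorem interfaceCochain_apply (e : Edge) :
    σ.interfaceCochain e = if σ.IsInterface e.1 (e.1 + edgeDir e.2) then 1 else 0 := rfl

open Classical in
theorem ite_isInterface_eq_add {v w : ℤ × ℤ} (hv : v ∈ Tset n) (hv0 : v ∉ σ.P 0) (hw : w ∈ Tset n)
    (hw0 : w ∉ σ.P 0) :
    (if σ.IsInterface v w then 1 else 0 : ZMod 2) =
      (if v ∈ σ.P 1 then 1 else 0) + (if w ∈ σ.P 1 then 1 else 0) := by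
  rcases σ.mem_one_or_two hv hv0 with hv | hv <;> rcases σ.mem_one_or_two hw hw0 with hw | hw <;>
    simp [IsInterface, hv, hw, σ.notMem_of_mem (show (1 : Fin 3) ≠ 2 by decide),
      σ.notMem_of_mem (show (2 : Fin 3) ≠ 1 by decide), CharTwo.add_self_eq_zero]

open Classical in
theorem interface_triangle_sum (hA : ¬ CondA n σ) {x y z : ℤ × ℤ} (hxy : TriLattice.Adj x y)
    (hxz : TriLattice.Adj x z) (hyz : TriLattice.Adj y z) (hx : x ∉ σ.P 0) (hy : y ∉ σ.P 0)
    (hz : z ∉ σ.P 0) :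
    (if σ.IsInterface x y then 1 else 0) + (if σ.IsInterface x z then 1 else 0) +
      (if σ.IsInterface z y then 1 else 0) = (0 : ZMod 2) := by
  by_cases hT : x ∈ Tset n ∧ y ∈ Tset n ∧ z ∈ Tset n
  · obtain ⟨hxT, hyT, hzT⟩ := hT
    rw [σ.ite_isInterface_eq_add hxT hx hyT hy, σ.ite_isInterface_eq_add hxT hx hzT hz,
      σ.ite_isInterface_eq_add hzT hz hyT hy]
    ring_nf
    reduce_mod_char
  rcases not_and_or.1 hT with hxT | hT
  · rw [if_neg (σ.not_isInterface_of_notMem_left hxT),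
      if_neg (σ.not_isInterface_of_notMem_left hxT),
      if_neg fun h => hA (σ.condA_of_isInterface h hyz.symm hxz.symm hxy.symm hxT)]
    simp
  rcases not_and_or.1 hT with hyT | hzT
  · rw [if_neg (σ.not_isInterface_of_notMem_right hyT),
      if_neg (σ.not_isInterface_of_notMem_right hyT),
      if_neg fun h => hA (σ.condA_of_isInterface h hxz hxy hyz.symm hyT)]
    simp
  · rw [if_neg (σ.not_isInterface_of_notMem_right hzT),
      if_neg (σ.not_isInterface_of_notMem_left hzT),
      if_neg fun h => hA (σ.condA_of_isInterface h hxy hxz hyz hzT)]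
    simp

theorem exists_mem_verts_of_coboundary_ne_zero (hA : ¬ CondA n σ) {f : Face}
    (hf : coboundary σ.interfaceCochain f ≠ 0) : ∃ v ∈ σ.P 0, v ∈ f.verts := by
  by_contra! h
  apply hf
  obtain ⟨⟨a, b⟩, _ | _⟩ := f
  · rw [coboundary_apply_lower]
    simp only [interfaceCochain_apply]
    rw [show (a, b) + edgeDir 0 = (a + 1, b) by simp [edgeDir],
      show (a, b) + edgeDir 1 = (a, b + 1) by simp [edgeDir],
      show (a, b) + (0, 1) + edgeDir 2 = (a + 1, b) by simp [edgeDir],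
      show (a, b) + (0, 1) = (a, b + 1) by simp]
    refine σ.interface_triangle_sum hA ?_ ?_ ?_ (h _ · ?_) (h _ · ?_) (h _ · ?_) <;>
      simp [triLattice_adj_iff, Fin.exists_fin_succ, edgeDir, Prod.ext_iff, Face.verts]
  · rw [coboundary_apply_upper]
    simp only [interfaceCochain_apply]
    rw [show (a, b) + (0, 1) + edgeDir 0 = (a + 1, b + 1) by simp [edgeDir],
      show (a, b) + (1, 0) + edgeDir 1 = (a + 1, b + 1) by simp [edgeDir],
      show (a, b) + (0, 1) + edgeDir 2 = (a + 1, b) by simp [edgeDir],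
      show (a, b) + (0, 1) = (a, b + 1) by simp, show (a, b) + (1, 0) = (a + 1, b) by simp,
      add_right_comm]
    refine σ.interface_triangle_sum hA ?_ ?_ ?_ (h _ · ?_) (h _ · ?_) (h _ · ?_) <;>
      simp [triLattice_adj_iff, Fin.exists_fin_succ, edgeDir, Prod.ext_iff, Face.verts]

theorem exists_cocycle (hA : ¬ CondA n σ) : ∃ c : Edge →₀ ZMod 2, coboundary c = 0 ∧
    ∀ e : Edge, ¬ e.Touches (σ.P 0) → c e = σ.interfaceCochain e := by
  obtain ⟨κ, hκ, hδ⟩ := mem_touchingCoboundaries (σ.sc 0).1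
    (fun f hf => σ.exists_mem_verts_of_coboundary_ne_zero hA (Finsupp.mem_support_iff.1 hf))
    (sum_coboundary σ.interfaceCochain)
  refine ⟨σ.interfaceCochain - κ, by rw [map_sub, hδ, sub_self], fun e he => ?_⟩
  rw [Finsupp.coe_sub, Pi.sub_apply, (Finsupp.mem_supported' _ _).1 hκ e he, sub_zero]

open Classical in
def IsInterfacePotential (μ : ℤ × ℤ → ZMod 2) : Prop :=
  (∀ v w, TriLattice.Adj v w → v ∉ σ.P 0 → w ∉ σ.P 0 →
    μ v + μ w = if σ.IsInterface v w then 1 else 0) ∧ ∀ o ∉ Tset n, μ o = 0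

theorem exists_isInterfacePotential (hA : ¬ CondA n σ) : ∃ μ, σ.IsInterfacePotential μ := by
  obtain ⟨c, hc, hcI⟩ := σ.exists_cocycle hA
  have hT : ∀ e : Edge, ¬ e.Touches (Tset n) → c e = 0 := fun e he => by
    rw [hcI e fun h => he (h.imp (σ.subset_tset 0 ·) (σ.subset_tset 0 ·)), interfaceCochain_apply,
      if_neg (σ.not_isInterface_of_notMem_left (not_or.1 he).1)]
  refine ⟨rayPotential (n + 1) c, fun v w hvw hv hw => ?_,
    fun o ho => rayPotential_eq_zero_of_notMem hT hc ho⟩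
  obtain ⟨e, he, hsum⟩ := rayPotential_add_of_adj (apply_eq_zero_of_le hT) hc hvw
  rcases he with ⟨rfl, rfl⟩ | ⟨rfl, rfl⟩
  · rw [hsum, hcI e (by rintro (h | h) <;> contradiction), interfaceCochain_apply]
  · rw [hsum, hcI e (by rintro (h | h) <;> contradiction), interfaceCochain_apply,
      σ.isInterface_comm]

theorem IsInterfacePotential.eq_zero {σ : TriPartition n} {μ : ℤ × ℤ → ZMod 2}
    (hμ : σ.IsInterfacePotential μ) {i : Fin 3} (hi : i ≠ 0) (hbd : σ.P i ∩ bdT n ≠ ∅)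
    {v : ℤ × ℤ} (hv : v ∈ σ.P i) : μ v = 0 := by
  have h0 : ∀ u ∈ σ.P i, u ∉ σ.P 0 := fun u hu => σ.notMem_of_mem hi hu
  obtain ⟨p, hp, -, o, hpo, ho⟩ := Set.nonempty_iff_ne_empty.2 hbd
  have hpo := hμ.1 p o hpo (h0 p hp) fun h => ho (σ.subset_tset 0 h)
  rw [if_neg (σ.not_isInterface_of_notMem_right ho), hμ.2 o ho, add_zero] at hpo
  rw [← hpo]
  refine (σ.sc i).1.apply_eq_of_adj (fun u hu w hw huw => ?_) hv hp
  have := hμ.1 u w huw (h0 u hu) (h0 w hw)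
  rwa [if_neg (σ.not_isInterface_of_mem hu hw), CharTwo.add_eq_zero] at this

theorem condD_of_not_condA (hA : ¬ CondA n σ) (hB : ¬ CondB n σ) (hC : ¬ CondC n σ) :
    CondD n σ := by
  intro x hx y hy hxy
  obtain ⟨μ, hμ⟩ := σ.exists_isInterfacePotential hA
  have := hμ.1 x y hxy (σ.notMem_of_mem (by decide) hx) (σ.notMem_of_mem (by decide) hy)
  rw [hμ.eq_zero (by decide) hB hx, hμ.eq_zero (by decide) hC hy, if_pos (.inl ⟨hx, hy⟩)] at this
  exact zero_ne_one (add_zero (0 : ZMod 2) ▸ this)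

theorem not_condC_of_condB (hB : CondB n σ) : ¬ CondC n σ := by
  intro hC
  refine not_connSet_union ((σ.nonempty 1).mono Set.subset_union_left)
    (tset_compl_nonempty n) ?_ ?_ (σ.compl_P_zero ▸ (σ.sc 0).2)
  · exact Set.disjoint_compl_right_iff_subset.2
      (Set.union_subset (σ.subset_tset 1) (σ.subset_tset 2))
  · rintro v (hv | hv) w hw hvw
    · exact hB.subset (σ.mem_bdT hv hvw hw)
    · exact hC.subset (σ.mem_bdT hv hvw hw)

theorem not_condD_of_condB (hB : CondB n σ) : ¬ CondD n σ := by
  intro hD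
  refine not_connSet_union (σ.nonempty 1) ((σ.nonempty 2).mono Set.subset_union_left) ?_ ?_
    (by rw [← Set.union_assoc, ← compl_P_zero]; exact (σ.sc 0).2)
  · refine Set.disjoint_union_right.2 ⟨σ.disj 1 2 (by decide), ?_⟩
    exact Set.disjoint_compl_right_iff_subset.2 (σ.subset_tset 1)
  · rintro v hv w (hw | hw) hvw
    · exact hD v hv w hw hvw
    · exact hB.subset (σ.mem_bdT hv hvw hw)

theorem not_condD_of_condC (hC : CondC n σ) : ¬ CondD n σ := by
  intro hD
  refine not_connSet_union (σ.nonempty 2) ((σ.nonempty 1).mono Set.subset_union_left) ?_ ?_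
    (by rw [← Set.union_assoc, Set.union_comm (σ.P 2), ← compl_P_zero]; exact (σ.sc 0).2)
  · refine Set.disjoint_union_right.2 ⟨σ.disj 2 1 (by decide), ?_⟩
    exact Set.disjoint_compl_right_iff_subset.2 (σ.subset_tset 2)
  · rintro v hv w (hw | hw) hvw
    · exact hD w hw v hv hvw.symm
    · exact hC.subset (σ.mem_bdT hv hvw hw)

end TriPartition

theorem four_cases_general (n : ℕ) (σ : TriPartition n) :
    (CondA n σ ∧ ¬ CondB n σ ∧ ¬ CondC n σ ∧ ¬ CondD n σ) ∨
    (¬ CondA n σ ∧ CondB n σ ∧ ¬ CondC n σ ∧ ¬ CondD n σ) ∨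
    (¬ CondA n σ ∧ ¬ CondB n σ ∧ CondC n σ ∧ ¬ CondD n σ) ∨
    (¬ CondA n σ ∧ ¬ CondB n σ ∧ ¬ CondC n σ ∧ CondD n σ) := by
  by_cases hA : CondA n σ
  · obtain ⟨a, b, ha, hb, hab⟩ := hA
    exact .inl ⟨⟨a, b, ha, hb, hab⟩, fun hB => hB.subset ha, fun hC => hC.subset hb,
      fun hD => hD a ha.1 b hb.1 hab⟩
  by_cases hB : CondB n σ
  · exact .inr <| .inl ⟨hA, hB, σ.not_condC_of_condB hB, σ.not_condD_of_condB hB⟩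
  by_cases hC : CondC n σ
  · exact .inr <| .inr <| .inl ⟨hA, hB, hC, σ.not_condD_of_condC hC⟩
  exact .inr <| .inr <| .inr ⟨hA, hB, hC, σ.condD_of_not_condA hA hB hC⟩

/-- Lemma 4.25: for a partition with `C_1 ∈ P_1`, exactly one of the four cases
(A), (B), (C), (D) holds. -/
theorem four_cases (n : ℕ) (σ : TriPartition n) (hc1 : c1 ∈ σ.P 0) :
    (CondA n σ ∧ ¬ CondB n σ ∧ ¬ CondC n σ ∧ ¬ CondD n σ) ∨
    (¬ CondA n σ ∧ CondB n σ ∧ ¬ CondC n σ ∧ ¬ CondD n σ) ∨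
    (¬ CondA n σ ∧ ¬ CondB n σ ∧ CondC n σ ∧ ¬ CondD n σ) ∨
    (¬ CondA n σ ∧ ¬ CondB n σ ∧ ¬ CondC n σ ∧ CondD n σ) :=
  four_cases_general n σ

end Redistrict
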